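/- arXiv:1203.0734 — 3 statements merged into one kernel-verified Lean document; each statement's English description precedes it below -/
import Mathlib

section
/- For any α ∈ [1,2], any σ ∈ (0,1), and any x ∈ ℝ^N with x ≠ 0, the gradient of q_σ(x) = (1+|x|^α)/(1+σ(1+|x|^α)) satisfies |∇q_σ(x)| ≤ α·2^{1-α/2}·q_σ(x)^{1/2} for |x| ≥ 1/2. -/
/-! The factor `‖x‖ ^ (α - 1)` is at most `√(1 + ‖x‖ ^ α)` for `α ∈ [1, 2]`, and the
denominator `D = 1 + σ (1 + ‖x‖ ^ α) ≥ 1` satisfies `√D ≤ D ^ 2`; the constant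
`2 ^ (1 - α / 2) ≥ 1` is then slack. -/

open Real

lemma rpow_two_mul_sub_two_le_one_add_rpow {r α : ℝ} (hr : 0 ≤ r) (hα1 : 1 ≤ α)
    (hα2 : α ≤ 2) : r ^ (2 * α - 2) ≤ 1 + r ^ α := by
  rcases le_or_gt r 1 with hr1 | hr1
  · have : r ^ (2 * α - 2) ≤ 1 := rpow_le_one hr hr1 (by linarith)
    linarith [rpow_nonneg hr α]
  · have : r ^ (2 * α - 2) ≤ r ^ α := rpow_le_rpow_of_exponent_le hr1.le (by linarith)
    linarith

lemma rpow_sub_one_le_sqrt_one_add_rpow {r α : ℝ} (hr : 0 ≤ r) (hα1 : 1 ≤ α)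
    (hα2 : α ≤ 2) : r ^ (α - 1) ≤ √(1 + r ^ α) := by
  apply le_sqrt_of_sq_le
  rw [← rpow_two, ← rpow_mul hr, sub_one_mul, mul_comm]
  exact rpow_two_mul_sub_two_le_one_add_rpow hr hα1 hα2

lemma div_sq_le_sqrt_div {a b D : ℝ} (hD : 1 ≤ D) (hab : a ≤ √b) :
    a / D ^ 2 ≤ √(b / D) := by
  have hsqrtD : √D ≤ D ^ 2 :=
    (sqrt_le_self_iff.mpr (Or.inr hD)).trans (le_self_pow₀ hD two_ne_zero)
  rw [sqrt_div' b (by linarith)]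
  exact div_le_div₀ (sqrt_nonneg b) hab (sqrt_pos.mpr (by linarith)) hsqrtD

theorem stmt_1_general (N : ℕ) (α σ : ℝ) (hα : α ∈ Set.Icc (1:ℝ) 2)
    (hσ : σ ∈ Set.Ioo (0:ℝ) 1) (x : EuclideanSpace ℝ (Fin N)) (hx : x ≠ 0) :
    ‖((α * ‖x‖ ^ (α - 2)) / (1 + σ * (1 + ‖x‖ ^ α)) ^ 2) • x‖ ≤
      α * 2 ^ (1 - α / 2) *
        Real.sqrt ((1 + ‖x‖ ^ α) / (1 + σ * (1 + ‖x‖ ^ α))) := by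
  obtain ⟨hα1, hα2⟩ := hα
  set r := ‖x‖
  have hr : 0 < r := norm_pos_iff.mpr hx
  set D := 1 + σ * (1 + r ^ α)
  have hD : 1 ≤ D := le_add_of_nonneg_right (mul_nonneg hσ.1.le (by positivity))
  have hnorm : ‖((α * r ^ (α - 2)) / D ^ 2) • x‖ = α * (r ^ (α - 1) / D ^ 2) := by
    rw [norm_smul, norm_of_nonneg (by positivity),
      show α - 2 = α - 1 - 1 by ring, rpow_sub_one hr.ne']
    field_simp
    rfl
  calc _ = α * (r ^ (α - 1) / D ^ 2) := hnorm
    _ ≤ α * √((1 + r ^ α) / D) := by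
      gcongr
      exact div_sq_le_sqrt_div hD (rpow_sub_one_le_sqrt_one_add_rpow hr.le hα1 hα2)
    _ ≤ α * 2 ^ (1 - α / 2) * √((1 + r ^ α) / D) := by
      gcongr ?_ * _
      exact le_mul_of_one_le_right (by linarith) (one_le_rpow one_le_two (by linarith))

theorem stmt_1 (N : ℕ) (hN : 1 ≤ N) (α σ : ℝ) (hα : α ∈ Set.Icc (1:ℝ) 2)
    (hσ : σ ∈ Set.Ioo (0:ℝ) 1) (x : EuclideanSpace ℝ (Fin N)) (hx : x ≠ 0)
    (hx2 : ‖x‖ ≥ 1 / 2) :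
    ‖((α * ‖x‖ ^ (α - 2)) / (1 + σ * (1 + ‖x‖ ^ α)) ^ 2) • x‖ ≤
      α * 2 ^ (1 - α / 2) *
        Real.sqrt ((1 + ‖x‖ ^ α) / (1 + σ * (1 + ‖x‖ ^ α))) :=
  stmt_1_general N α σ hα hσ x hx
end

section
/- Let q : ℝ^N → (0,∞) satisfy |∇q(x)| ≤ κ̃ q(x)^{1/2} everywhere with κ̃ ≥ 1, and define ρ(x) = q(x)^{1/2}/(2κ̃). Then ρ is Lipschitz with constant at most 1/4, and for every x₀ ∈ ℝ^N and every x with |x - x₀| ≤ 2ρ(x₀), one has (1/2)q(x₀)^{1/2} ≤ q(x)^{1/2} ≤ (3/2)q(x₀)^{1/2}. -/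
/-!
Since `‖D√q‖ = ‖Dq‖ / (2√q) ≤ κ/2`, the mean value inequality makes `√q` Lipschitz with
constant `κ/2`; dividing by `2κ` gives the constant `1/4` for `ρ`. On the ball
`‖x - x₀‖ ≤ 2ρ(x₀) = √q(x₀)/κ` the same estimate moves `√q` by at most `√q(x₀)/2`.
-/

open Real

section SqrtLipschitz

variable {E : Type*} [NormedAddCommGroup E] [NormedSpace ℝ E] {f : E → ℝ} {κ : ℝ}

theorem norm_fderiv_sqrt_le {x : E} (hf : DifferentiableAt ℝ f x) (hpos : 0 < f x)
    (hgrad : ‖fderiv ℝ f x‖ ≤ κ * √(f x)) :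
    ‖fderiv ℝ (fun y => √(f y)) x‖ ≤ κ / 2 := by
  have hsqrt : 0 < √(f x) := sqrt_pos.2 hpos
  rw [fderiv_sqrt hf hpos.ne', norm_smul, norm_of_nonneg (by positivity)]
  calc 1 / (2 * √(f x)) * ‖fderiv ℝ f x‖ ≤ 1 / (2 * √(f x)) * (κ * √(f x)) := by gcongr
    _ = κ / 2 := by field_simp

theorem abs_sqrt_sub_sqrt_le_of_norm_fderiv_le (hf : Differentiable ℝ f)
    (hpos : ∀ x, 0 < f x) (hgrad : ∀ x, ‖fderiv ℝ f x‖ ≤ κ * √(f x)) (x y : E) :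
    |√(f x) - √(f y)| ≤ κ / 2 * ‖x - y‖ :=
  convex_univ.norm_image_sub_le_of_norm_fderiv_le
    (fun z _ => (hf z).sqrt (hpos z).ne')
    (fun z _ => norm_fderiv_sqrt_le (hf z) (hpos z) (hgrad z)) (Set.mem_univ y) (Set.mem_univ x)

end SqrtLipschitz

theorem stmt_7_general (N : ℕ) (κ : ℝ) (hκ : 1 ≤ κ)
    (q : EuclideanSpace ℝ (Fin N) → ℝ) (hqpos : ∀ x, 0 < q x)
    (hq : ContDiff ℝ 1 q)
    (hgrad : ∀ x, ‖fderiv ℝ q x‖ ≤ κ * Real.sqrt (q x))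
    (ρ : EuclideanSpace ℝ (Fin N) → ℝ)
    (hρ : ∀ x, ρ x = Real.sqrt (q x) / (2 * κ)) :
    (∀ x y, |ρ x - ρ y| ≤ (1 / 4) * ‖x - y‖) ∧
      ∀ x₀ x, ‖x - x₀‖ ≤ 2 * ρ x₀ →
        (1 / 2) * Real.sqrt (q x₀) ≤ Real.sqrt (q x) ∧
          Real.sqrt (q x) ≤ (3 / 2) * Real.sqrt (q x₀) := by
  have hκ₀ : 0 < κ := by linarith
  have hlip := abs_sqrt_sub_sqrt_le_of_norm_fderiv_le (hq.differentiable one_ne_zero) hqpos hgrad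
  refine ⟨fun x y => ?_, fun x₀ x hx => ?_⟩
  · rw [hρ, hρ, div_sub_div_same, abs_div, abs_of_pos (show 0 < 2 * κ by positivity),
      div_le_iff₀ (by positivity)]
    calc |√(q x) - √(q y)| ≤ κ / 2 * ‖x - y‖ := hlip x y
      _ = 1 / 4 * ‖x - y‖ * (2 * κ) := by ring
  · have hclose : |√(q x) - √(q x₀)| ≤ √(q x₀) / 2 :=
      calc |√(q x) - √(q x₀)| ≤ κ / 2 * ‖x - x₀‖ := hlip x x₀
        _ ≤ κ / 2 * (2 * ρ x₀) := by gcongr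
        _ = √(q x₀) / 2 := by rw [hρ]; field_simp
    obtain ⟨hlower, hupper⟩ := abs_le.1 hclose
    constructor <;> linarith

theorem stmt_7 (N : ℕ) (hN : 1 ≤ N) (κ : ℝ) (hκ : 1 ≤ κ)
    (q : EuclideanSpace ℝ (Fin N) → ℝ) (hqpos : ∀ x, 0 < q x)
    (hq : ContDiff ℝ 1 q)
    (hgrad : ∀ x, ‖fderiv ℝ q x‖ ≤ κ * Real.sqrt (q x))
    (ρ : EuclideanSpace ℝ (Fin N) → ℝ)
    (hρ : ∀ x, ρ x = Real.sqrt (q x) / (2 * κ)) :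
    (∀ x y, |ρ x - ρ y| ≤ (1 / 4) * ‖x - y‖) ∧
      ∀ x₀ x, ‖x - x₀‖ ≤ 2 * ρ x₀ →
        (1 / 2) * Real.sqrt (q x₀) ≤ Real.sqrt (q x) ∧
          Real.sqrt (q x) ≤ (3 / 2) * Real.sqrt (q x₀) :=
  stmt_7_general N κ hκ q hqpos hq hgrad ρ hρ
end

section
/- Let α ∈ [0,2) and β > 0, and define h(r) = (1+r^α)·ψ''(r)/ψ(r), where ψ(r) = r^{-(N-1)/2}((1+r^α)/r^β)^{1/4}. Then h(r) → 0 as r → ∞. -/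
/-!
Write `u = r^α / (1 + r^α) ∈ [0, 1]` and `φ(r) = r^p (1 + r^α)^q`. Then `r φ'/φ = p + qαu`, and
since `r u' = αu(1 - u)`, also `r² φ''/φ = (p + qαu)² - (p + qαu) + qα²u(1 - u)` is bounded.
Hence `(1 + r^α) φ''/φ` is this bounded factor times `(1 + r^α)/r² = r^(-2) + r^(α-2)`, which
tends to `0` because `α < 2`. The statement's `ψ` is `φ` with `p = -(N-1)/2 - β/4`, `q = 1/4`.
-/

open Filter Topology

lemma deriv_deriv_eq_mul_of_hasDerivAt {𝕜 : Type*} [NontriviallyNormedField 𝕜] {f g : 𝕜 → 𝕜}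
    {g' x : 𝕜} (hf : ∀ᶠ y in 𝓝 x, HasDerivAt f (f y * g y) y) (hg : HasDerivAt g g' x) :
    deriv (deriv f) x = f x * (g x ^ 2 + g') := by
  have hderiv : deriv f =ᶠ[𝓝 x] fun y => f y * g y := hf.mono fun y hy => hy.deriv
  rw [hderiv.deriv_eq, (hf.self_of_nhds.fun_mul hg).deriv]
  ring

noncomputable def rpowRatio (α r : ℝ) : ℝ := r ^ α / (1 + r ^ α)

section

variable {p q α r : ℝ}

lemma rpowRatio_mem_Icc (hr : 0 < r) : rpowRatio α r ∈ Set.Icc 0 1 := by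
  have hT := Real.rpow_pos_of_pos hr α
  refine ⟨by unfold rpowRatio; positivity, ?_⟩
  rw [rpowRatio, div_le_one (by positivity)]
  linarith

lemma hasDerivAt_one_add_rpow (hr : 0 < r) :
    HasDerivAt (fun x : ℝ => 1 + x ^ α) (α * r ^ (α - 1)) r :=
  (Real.hasDerivAt_rpow_const (Or.inl hr.ne')).const_add 1

lemma hasDerivAt_rpowRatio (hr : 0 < r) :
    HasDerivAt (rpowRatio α) (α * rpowRatio α r * (1 - rpowRatio α r) / r) r := by
  refine ((Real.hasDerivAt_rpow_const (Or.inl hr.ne')).fun_div (hasDerivAt_one_add_rpow hr)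
    (by positivity)).congr_deriv ?_
  rw [rpowRatio, Real.rpow_sub_one hr.ne']
  field_simp

lemma hasDerivAt_rpow_mul_one_add_rpow_rpow (hr : 0 < r) :
    HasDerivAt (fun x : ℝ => x ^ p * (1 + x ^ α) ^ q)
      (r ^ p * (1 + r ^ α) ^ q * ((p + q * α * rpowRatio α r) / r)) r := by
  have hA : 0 < 1 + r ^ α := by positivity
  refine ((Real.hasDerivAt_rpow_const (p := p) (Or.inl hr.ne')).fun_mul
    ((hasDerivAt_one_add_rpow hr).rpow_const (p := q) (Or.inl hA.ne'))).congr_deriv ?_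
  rw [rpowRatio, Real.rpow_sub_one hr.ne', Real.rpow_sub_one hr.ne', Real.rpow_sub_one hA.ne']
  field_simp

lemma hasDerivAt_logDeriv_rpow_mul_one_add_rpow_rpow (hr : 0 < r) :
    HasDerivAt (fun x : ℝ => (p + q * α * rpowRatio α x) / x)
      ((q * α ^ 2 * rpowRatio α r * (1 - rpowRatio α r) - (p + q * α * rpowRatio α r)) / r ^ 2)
      r := by
  refine ((((hasDerivAt_rpowRatio hr).const_mul (q * α)).const_add p).fun_div (hasDerivAt_id' r)
    hr.ne').congr_deriv ?_
  field_simp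

lemma deriv_deriv_rpow_mul_one_add_rpow_rpow (hr : 0 < r) :
    deriv (deriv fun x : ℝ => x ^ p * (1 + x ^ α) ^ q) r =
      r ^ p * (1 + r ^ α) ^ q *
        (((p + q * α * rpowRatio α r) ^ 2 - (p + q * α * rpowRatio α r)
          + q * α ^ 2 * rpowRatio α r * (1 - rpowRatio α r)) / r ^ 2) := by
  rw [deriv_deriv_eq_mul_of_hasDerivAt
    (Filter.mem_of_superset (Ioi_mem_nhds hr) fun y hy => hasDerivAt_rpow_mul_one_add_rpow_rpow hy)
    (hasDerivAt_logDeriv_rpow_mul_one_add_rpow_rpow hr)]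
  field_simp
  ring

lemma tendsto_one_add_rpow_div_sq_atTop (hα : α < 2) :
    Tendsto (fun r : ℝ => (1 + r ^ α) / r ^ 2) atTop (𝓝 0) := by
  have h := (tendsto_rpow_neg_atTop two_pos).add (tendsto_rpow_neg_atTop (sub_pos.2 hα))
  rw [add_zero] at h
  refine h.congr' ?_
  filter_upwards [eventually_gt_atTop 0] with r hr
  rw [Real.rpow_neg hr.le, neg_sub, Real.rpow_sub hr, Real.rpow_two]
  field_simp

theorem tendsto_one_add_rpow_mul_deriv_deriv_div_atTop (hα : α < 2) :
    Tendsto (fun r : ℝ => (1 + r ^ α) * deriv (deriv fun x : ℝ => x ^ p * (1 + x ^ α) ^ q) r /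
      (r ^ p * (1 + r ^ α) ^ q)) atTop (𝓝 0) := by
  set P : ℝ → ℝ := fun u => (p + q * α * u) ^ 2 - (p + q * α * u) + q * α ^ 2 * u * (1 - u)
  obtain ⟨C, hC⟩ := (isCompact_Icc (a := (0 : ℝ)) (b := 1)).exists_bound_of_continuousOn (f := P)
    (by fun_prop)
  have hbdd : IsBoundedUnder (· ≤ ·) atTop (norm ∘ fun r => P (rpowRatio α r)) :=
    isBoundedUnder_of_eventually_le (a := C)
      ((eventually_gt_atTop 0).mono fun r hr => hC _ (rpowRatio_mem_Icc hr))
  refine ((tendsto_one_add_rpow_div_sq_atTop hα).zero_mul_isBoundedUnder_le hbdd).congr' ?_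
  filter_upwards [eventually_gt_atTop 0] with r hr
  rw [deriv_deriv_rpow_mul_one_add_rpow_rpow hr]
  field_simp
  ring

end

theorem stmt_11_general (N : ℕ) (α β : ℝ) (hα : α ∈ Set.Ico (0:ℝ) 2)
    (ψ : ℝ → ℝ)
    (hψ : ∀ r, ψ r = r ^ (-((N:ℝ) - 1) / 2) * (1 + r ^ α) ^ ((1:ℝ)/4) * r ^ (-β / 4)) :
    Tendsto (fun r => (1 + r ^ α) * deriv (deriv ψ) r / ψ r) atTop (nhds 0) := by
  set p := -((N:ℝ) - 1) / 2 + -β / 4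
  have hψ_Ioi : ∀ r > 0, ψ r = r ^ p * (1 + r ^ α) ^ ((1:ℝ)/4) := fun r hr => by
    rw [hψ, mul_right_comm, ← Real.rpow_add hr]
  refine (tendsto_one_add_rpow_mul_deriv_deriv_div_atTop (p := p) (q := 1/4) hα.2).congr' ?_
  filter_upwards [eventually_gt_atTop 0] with r hr
  have hψ_near : ψ =ᶠ[𝓝 r] fun x => x ^ p * (1 + x ^ α) ^ ((1:ℝ)/4) :=
    Filter.mem_of_superset (Ioi_mem_nhds hr) hψ_Ioi
  rw [hψ_near.deriv.deriv_eq, hψ_Ioi r hr]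

theorem stmt_11 (N : ℕ) (hN : 1 ≤ N) (α β : ℝ) (hα : α ∈ Set.Ico (0:ℝ) 2)
    (hβ : 0 < β)
    (ψ : ℝ → ℝ)
    (hψ : ∀ r, ψ r = r ^ (-((N:ℝ) - 1) / 2) * (1 + r ^ α) ^ ((1:ℝ)/4) * r ^ (-β / 4)) :
    Tendsto (fun r => (1 + r ^ α) * deriv (deriv ψ) r / ψ r) atTop (nhds 0) :=
  stmt_11_general N α β hα ψ hψ
end
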